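/- arXiv:2210.04075 — 2 statements merged into one kernel-verified Lean document; each statement's English description precedes it below -/
import Mathlib

section
/- Let A be a commutative Banach algebra, φ a character of A, and d a nonzero continuous point derivation at φ. Then the derivation D(a) = d(a)·φ from A to A* is not cyclic; in particular, A is not cyclically weakly amenable and hence not weakly amenable. -/
/-!
The functional `D a = d a • φ` is a derivation into the dual module exactly because `d` is a
point derivation at the multiplicative `φ`. It is not cyclic since `D a a = d a * φ a`, and the
product of two nonzero additive functionals into a ring without zero divisors does not vanish
identically. Inner derivations `D a b = z (a b) - z (b a)` are cyclic, so `D` is not inner either.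
-/

/-- If `f b ≠ 0` and `g u ≠ 0` but `g b = f u = 0`, then `b + u` works. -/
theorem exists_mul_apply_ne_zero {M R F : Type*} [AddZeroClass M] [NonUnitalNonAssocSemiring R]
    [NoZeroDivisors R] [FunLike F M R] [AddMonoidHomClass F M R] {f g : F}
    (hf : ∃ b, f b ≠ 0) (hg : ∃ u, g u ≠ 0) : ∃ a, f a * g a ≠ 0 := by
  obtain ⟨b, hb⟩ := hf
  obtain ⟨u, hu⟩ := hg
  by_cases hgb : g b = 0
  · by_cases hfu : f u = 0
    · exact ⟨b + u, by simpa [hgb, hfu] using mul_ne_zero hb hu⟩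
    · exact ⟨u, mul_ne_zero hfu hu⟩
  · exact ⟨b, mul_ne_zero hb hgb⟩

theorem smulRight_mul_apply_eq_add {𝕜 A : Type*} [NontriviallyNormedField 𝕜] [NormedRing A]
    [NormedSpace 𝕜 A] {φ d : A →L[𝕜] 𝕜} (hφ_mul : ∀ a b, φ (a * b) = φ a * φ b)
    (hd : ∀ a b, d (a * b) = d a * φ b + φ a * d b) (a b c : A) :
    d.smulRight φ (a * b) c = d.smulRight φ a (b * c) + d.smulRight φ b (c * a) := by
  simp only [ContinuousLinearMap.smulRight_apply, smul_apply, smul_eq_mul, hd, hφ_mul]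
  ring

theorem point_derivation_not_cyclic_general {A : Type*} [NormedCommRing A]
    [NormedAlgebra ℂ A]
    (φ : A →L[ℂ] ℂ) (hφ_ne : φ ≠ 0) (hφ_mul : ∀ a b, φ (a * b) = φ a * φ b)
    (d : A →L[ℂ] ℂ) (hd_ne : d ≠ 0)
    (hd : ∀ a b, d (a * b) = d a * φ b + φ a * d b) :
    (∃ a : A, d a * φ a ≠ 0) ∧
    ¬ (∀ D : A →L[ℂ] (A →L[ℂ] ℂ),
        (∀ a b c : A, D (a * b) c = D a (b * c) + D b (c * a)) →
        ∀ a : A, D a a = 0) ∧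
    ¬ (∀ D : A →L[ℂ] (A →L[ℂ] ℂ),
        (∀ a b c : A, D (a * b) c = D a (b * c) + D b (c * a)) →
        ∃ z : A →L[ℂ] ℂ, ∀ a b : A, D a b = z (a * b) - z (b * a)) := by
  obtain ⟨a, ha⟩ := exists_mul_apply_ne_zero (DFunLike.ne_iff.mp hd_ne) (DFunLike.ne_iff.mp hφ_ne)
  have hD_derivation := smulRight_mul_apply_eq_add hφ_mul hd
  have hD_aa : d.smulRight φ a a ≠ 0 := ha
  refine ⟨⟨a, ha⟩, fun hcyclic => hD_aa (hcyclic _ hD_derivation a), fun hinner => ?_⟩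
  obtain ⟨z, hz⟩ := hinner _ hD_derivation
  exact hD_aa (by rw [hz, sub_self])

/-- a commutative Banach algebra with a nonzero continuous point
derivation at a character admits the non-cyclic derivation `a ↦ d(a)·φ`; in
particular it is not cyclically weakly amenable, hence not weakly amenable. -/
theorem point_derivation_not_cyclic {A : Type*} [NormedCommRing A]
    [NormedAlgebra ℂ A] [CompleteSpace A]
    (φ : A →L[ℂ] ℂ) (hφ_ne : φ ≠ 0) (hφ_mul : ∀ a b, φ (a * b) = φ a * φ b)
    (d : A →L[ℂ] ℂ) (hd_ne : d ≠ 0)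
    (hd : ∀ a b, d (a * b) = d a * φ b + φ a * d b) :
    (∃ a : A, d a * φ a ≠ 0) ∧
    ¬ (∀ D : A →L[ℂ] (A →L[ℂ] ℂ),
        (∀ a b c : A, D (a * b) c = D a (b * c) + D b (c * a)) →
        ∀ a : A, D a a = 0) ∧
    ¬ (∀ D : A →L[ℂ] (A →L[ℂ] ℂ),
        (∀ a b c : A, D (a * b) c = D a (b * c) + D b (c * a)) →
        ∃ z : A →L[ℂ] ℂ, ∀ a b : A, D a b = z (a * b) - z (b * a)) :=
  point_derivation_not_cyclic_general φ hφ_ne hφ_mul d hd_ne hd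
end

section
/- Let A, B be Banach algebras and θ : A → B a continuous epimorphism (surjective algebra homomorphism). If A is point amenable (every continuous point derivation at every character of A is zero), then B is point amenable. -/
/-- Point amenability: every continuous point derivation at every character
vanishes. -/
def PointAmenable (A : Type*) [NormedRing A] [NormedAlgebra ℂ A] : Prop :=
  ∀ φ : A →L[ℂ] ℂ, φ ≠ 0 → (∀ a b, φ (a * b) = φ a * φ b) →
    ∀ d : A →L[ℂ] ℂ, (∀ a b, d (a * b) = d a * φ b + φ a * d b) → d = 0

theorem ContinuousLinearMap.comp_eq_zero_iff_of_surjective {R M N P : Type*} [Semiring R]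
    [TopologicalSpace M] [AddCommMonoid M] [Module R M]
    [TopologicalSpace N] [AddCommMonoid N] [Module R N]
    [TopologicalSpace P] [AddCommMonoid P] [Module R P]
    {θ : M →L[R] N} (hθ : Function.Surjective θ) {f : N →L[R] P} :
    f.comp θ = 0 ↔ f = 0 := by
  refine ⟨fun h => ?_, fun h => h ▸ zero_comp θ⟩
  ext n
  obtain ⟨m, rfl⟩ := hθ n
  exact congrArg (· m) h

theorem pointAmenable_of_epi_general {A B : Type*}
    [NormedRing A] [NormedAlgebra ℂ A]
    [NormedRing B] [NormedAlgebra ℂ B]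
    (θ : A →L[ℂ] B) (hθ_mul : ∀ a b, θ (a * b) = θ a * θ b)
    (hθ_surj : Function.Surjective θ)
    (hA : PointAmenable A) :
    PointAmenable B := by
  intro φ hφ hφ_mul d hd
  have hφθ : φ.comp θ ≠ 0 :=
    mt (ContinuousLinearMap.comp_eq_zero_iff_of_surjective hθ_surj).1 hφ
  have hdθ : d.comp θ = 0 :=
    hA (φ.comp θ) hφθ (fun a b => by simp [hθ_mul, hφ_mul])
      (d.comp θ) (fun a b => by simp [hθ_mul, hd])
  exact (ContinuousLinearMap.comp_eq_zero_iff_of_surjective hθ_surj).1 hdθ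

/-- point amenability passes to images under continuous
surjective algebra homomorphisms of Banach algebras. -/
theorem pointAmenable_of_epi {A B : Type*}
    [NormedRing A] [NormedAlgebra ℂ A] [CompleteSpace A]
    [NormedRing B] [NormedAlgebra ℂ B] [CompleteSpace B]
    (θ : A →L[ℂ] B) (hθ_mul : ∀ a b, θ (a * b) = θ a * θ b)
    (hθ_surj : Function.Surjective θ)
    (hA : PointAmenable A) :
    PointAmenable B :=
  pointAmenable_of_epi_general θ hθ_mul hθ_surj hA
end
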